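/- Suppose each p_i is additionally positively L-homogeneous for a positive integer L. Let w ∈ ℝ^d, w ≠ 0, be a KKT point of the problem min{‖w‖² : m(w) ≥ 1}: min_{1≤i≤n} p_i(w) ≥ 1 and there exist α_1, …, α_n ≥ 0 with α_i·(p_i(w) − 1) = 0 for every i and w = Σ_{i=1}^n α_i·∇p_i(w). Then m(w) = 1, and the normalized direction u := w/‖w‖ satisfies m(u) > 0 and is a critical direction of the margin on the sphere: there exist λ_1, …, λ_n ≥ 0 with Σλ_i = 1, λ_i = 0 whenever p_i(u) ≠ m(u), such that v := Σ_{i=1}^n λ_i·∇p_i(u) satisfies v − ⟨v,u⟩·u = 0. -/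

import Mathlib

/-!
Since `w ≠ 0`, stationarity forces some multiplier to be positive, and complementary slackness
makes its constraint active, so `m(w) = 1`. Homogeneity gives `p_i(u) = ‖w‖^(-L) p_i(w)` and
`∇p_i(u) = ‖w‖^(1-L) ∇p_i(w)`, so the normalized multipliers `α / ∑ α` are supported on the
constraints active at `u`, and stationarity says that `∑ λ_i ∇p_i(u)` is parallel to `u`, which is
criticality on the sphere.
-/

open scoped RealInnerProductSpace

section

variable {E : Type*} [NormedAddCommGroup E]

/-- No differentiability is assumed: where `f` is not differentiable, both sides are the junk
value `0`. -/
theorem smul_fderiv_smul_of_homogeneous {𝕜 F : Type*} [NontriviallyNormedField 𝕜]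
    [NormedSpace 𝕜 E] [NormedAddCommGroup F] [NormedSpace 𝕜 F] {f : E → F} {L : ℕ} {c : 𝕜}
    (hhom : ∀ x, f (c • x) = c ^ L • f x) (x : E) :
    c • fderiv 𝕜 f (c • x) = c ^ L • fderiv 𝕜 f x := by
  rw [← fderiv_comp_smul, show (f <| c • ·) = c ^ L • f from funext hhom,
    fderiv_const_smul_field, Pi.smul_apply]

theorem smul_gradient_smul_of_homogeneous [InnerProductSpace ℝ E] [CompleteSpace E]
    {f : E → ℝ} {L : ℕ} {c : ℝ} (hhom : ∀ x, f (c • x) = c ^ L * f x) (x : E) :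
    c • gradient f (c • x) = c ^ L • gradient f x := by
  simp only [gradient, ← map_smul,
    smul_fderiv_smul_of_homogeneous (𝕜 := ℝ) (fun y => (hhom y).trans (smul_eq_mul _ _).symm)]

theorem smul_sub_inner_smul_eq_zero [InnerProductSpace ℝ E] (s : ℝ) {w u : E}
    (hu : u = ‖w‖⁻¹ • w) : s • w - ⟪s • w, u⟫ • u = 0 := by
  subst hu
  rcases eq_or_ne w 0 with rfl | hw
  · simp
  rw [real_inner_smul_left, real_inner_smul_right, real_inner_self_eq_norm_sq, smul_smul,
    sub_eq_zero]
  congr 1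
  field_simp

end

theorem stmt_19_general {d n L : ℕ}
    (p : Fin n → EuclideanSpace ℝ (Fin d) → ℝ)
    (hphom : ∀ i, ∀ c : ℝ, 0 < c → ∀ x, p i (c • x) = c ^ L * p i x)
    (w : EuclideanSpace ℝ (Fin d)) (hw0 : w ≠ 0)
    (hfeas : 1 ≤ ⨅ i, p i w)
    (α : Fin n → ℝ) (hα0 : ∀ i, 0 ≤ α i)
    (hcomp : ∀ i, α i * (p i w - 1) = 0)
    (hstat : w = ∑ i, α i • gradient (p i) w)
    (u : EuclideanSpace ℝ (Fin d)) (hu : u = (‖w‖)⁻¹ • w) :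
    (⨅ i, p i w) = 1 ∧ 0 < (⨅ i, p i u) ∧
      ∃ lam : Fin n → ℝ, (∀ i, 0 ≤ lam i) ∧ ∑ i, lam i = 1 ∧
        (∀ i, p i u ≠ (⨅ j, p j u) → lam i = 0) ∧
        (∑ i, lam i • gradient (p i) u) -
          ⟪∑ i, lam i • gradient (p i) u, u⟫ • u = 0 := by
  obtain ⟨j, -, hj⟩ := Finset.exists_ne_zero_of_sum_ne_zero (hstat ▸ hw0)
  replace hj : α j ≠ 0 := left_ne_zero_of_smul hj
  have hactive : ∀ i, α i ≠ 0 → p i w = 1 := fun i hi =>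
    sub_eq_zero.1 ((mul_eq_zero.1 (hcomp i)).resolve_left hi)
  have hmargin : (⨅ i, p i w) = 1 :=
    le_antisymm ((ciInf_le (Finite.bddBelow_range _) j).trans (hactive j hj).le) hfeas
  set c := (‖w‖)⁻¹
  have hc : 0 < c := inv_pos.2 (norm_pos_iff.2 hw0)
  have hpu : ∀ i, p i u = c ^ L * p i w := fun i => hu ▸ hphom i c hc w
  have hmarginu : (⨅ i, p i u) = c ^ L := by
    simp_rw [hpu, ← Real.mul_iInf_of_nonneg (pow_nonneg hc.le L), hmargin, mul_one]
  set S := ∑ i, α i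
  have hS : 0 < S :=
    Finset.sum_pos' (fun i _ => hα0 i) ⟨j, Finset.mem_univ j, (hα0 j).lt_of_ne' hj⟩
  refine ⟨hmargin, hmarginu ▸ pow_pos hc L, fun i => α i / S,
    fun i => div_nonneg (hα0 i) hS.le, by rw [← Finset.sum_div, div_self hS.ne'], ?_, ?_⟩
  · intro i hi
    by_contra hαi
    exact hi (by rw [hmarginu, hpu, hactive i (div_ne_zero_iff.1 hαi).1, mul_one])
  · have hv : c • ∑ i, (α i / S) • gradient (p i) u = (c ^ L / S) • w := by
      rw [hstat]
      simp_rw [Finset.smul_sum, smul_comm c, hu,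
        smul_gradient_smul_of_homogeneous (hphom _ c hc), smul_smul]
      congr! 2
      ring
    rw [← inv_smul_smul₀ hc.ne' (∑ i, _), hv, smul_smul]
    exact smul_sub_inner_smul_eq_zero _ hu

/-- A nonzero KKT point of the max-margin problem (P) has margin exactly one,
and its normalized direction has positive margin and is a critical direction of
the margin on the sphere. -/
theorem stmt_19 {d n L : ℕ} (hd : 0 < d) (hn : 0 < n) (hL : 0 < L)
    (p : Fin n → EuclideanSpace ℝ (Fin d) → ℝ)
    (hp : ∀ i, ContDiff ℝ 1 (p i))
    (hphom : ∀ i, ∀ c : ℝ, 0 < c → ∀ x, p i (c • x) = c ^ L * p i x)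
    (w : EuclideanSpace ℝ (Fin d)) (hw0 : w ≠ 0)
    (hfeas : 1 ≤ ⨅ i, p i w)
    (α : Fin n → ℝ) (hα0 : ∀ i, 0 ≤ α i)
    (hcomp : ∀ i, α i * (p i w - 1) = 0)
    (hstat : w = ∑ i, α i • gradient (p i) w)
    (u : EuclideanSpace ℝ (Fin d)) (hu : u = (‖w‖)⁻¹ • w) :
    (⨅ i, p i w) = 1 ∧ 0 < (⨅ i, p i u) ∧
      ∃ lam : Fin n → ℝ, (∀ i, 0 ≤ lam i) ∧ ∑ i, lam i = 1 ∧
        (∀ i, p i u ≠ (⨅ j, p j u) → lam i = 0) ∧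
        (∑ i, lam i • gradient (p i) u) -
          ⟪∑ i, lam i • gradient (p i) u, u⟫ • u = 0 :=
  stmt_19_general p hphom w hw0 hfeas α hα0 hcomp hstat u hu
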